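/- Let γ > 0, ρ ∈ [0,1], and λ, μ ≥ 0 satisfy λ² < γ, μ² < γ, and λ²ρ²/(γ − λ² + λ²ρ²) + μ²ρ²/(γ − μ² + μ²ρ²) < 1 (i.e. the paper's threshold condition F(λ, μ, ρ, γ) < 1). Then the family ((k, l) ↦ (λ²/γ)^k (μ²/γ)^l / (2^{k+l} · k! · l!) · E[U^{2k} V^{2l}]), indexed by (k, l) ∈ ℕ², is summable; moreover exp((λ²U² + μ²V²)/(2γ)) is integrable and Σ_{k,l ≥ 0} (λ²/γ)^k (μ²/γ)^l / (2^{k+l} k! l!) · E[U^{2k} V^{2l}] = E[exp((λ²U² + μ²V²)/(2γ))] < ∞. (This is Lemma 5.13: below the computational threshold, the weighted double series of joint Gaussian moments arising in the low-degree bound for the correlated spiked Wishart model is bounded by a constant depending only on λ, μ, ρ, γ.) -/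

import Mathlib

open MeasureTheory ProbabilityTheory

set_option maxHeartbeats 1000000

lemma aux_sq_add_le (x y θ : ℝ) (h0 : 0 < θ) (h1 : θ < 1) :
    (x + y) ^ 2 ≤ x ^ 2 / θ + y ^ 2 / (1 - θ) := by
  have h2 : (0:ℝ) < 1 - θ := by linarith
  rw [div_add_div _ _ (ne_of_gt h0) (ne_of_gt h2), le_div_iff₀ (by positivity)]
  nlinarith [sq_nonneg ((1 - θ) * x - θ * y)]

lemma aux_exp_tsum (t : ℝ) : Real.exp t = ∑' n : ℕ, t ^ n / n.factorial := by
  rw [Real.exp_eq_exp_ℝ, NormedSpace.exp_eq_tsum_div]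

lemma aux_pow_le_exp (x : ℝ) (k : ℕ) :
    x ^ (2 * k) ≤ 6 ^ k * k.factorial * Real.exp (x ^ 2 / 6) := by
  have h := Real.pow_div_factorial_le_exp (x := x ^ 2 / 6) (by positivity) k
  have hk : (0:ℝ) < k.factorial := by exact_mod_cast k.factorial_pos
  have : x ^ (2 * k) = 6 ^ k * k.factorial * ((x ^ 2 / 6) ^ k / k.factorial) := by
    rw [pow_mul]
    field_simp
    rw [div_pow]
    field_simp
  rw [this]
  have h6 : (0:ℝ) ≤ 6 ^ k * k.factorial := by positivity
  exact mul_le_mul_of_nonneg_left h h6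

lemma aux_integrable_exp_sq_gaussian {c : ℝ} (hc : c < 1) :
    Integrable (fun x => Real.exp (c * x ^ 2 / 2)) (gaussianReal 0 1) := by
  rw [gaussianReal_of_var_ne_zero _ one_ne_zero]
  rw [integrable_withDensity_iff (measurable_gaussianPDF 0 1)
    (Filter.Eventually.of_forall fun x => ENNReal.ofReal_lt_top)]
  have heq : ∀ x : ℝ, Real.exp (c * x ^ 2 / 2) * (gaussianPDF 0 1 x).toReal
      = (Real.sqrt (2 * Real.pi))⁻¹ * Real.exp (-((1 - c) / 2) * x ^ 2) := by
    intro x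
    rw [gaussianPDF, ENNReal.toReal_ofReal (gaussianPDFReal_nonneg 0 1 x), gaussianPDFReal]
    push_cast
    rw [mul_one, mul_comm (Real.exp _), mul_assoc, ← Real.exp_add]
    ring_nf
  simp only [heq]
  exact (integrable_exp_neg_mul_sq (by linarith)).const_mul _

lemma aux_iIndepFun_congr {Ω : Type*} [MeasurableSpace Ω] {P : Measure Ω}
    {f g : Fin 3 → Ω → ℝ}
    (hf : iIndepFun f P) (h : ∀ i, f i =ᵐ[P] g i) :
    iIndepFun g P := by
  rw [iIndepFun_iff_measure_inter_preimage_eq_mul] at hf ⊢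
  intro S sets hsets
  have hae : ∀ᵐ ω ∂P, ∀ i, f i ω = g i ω := by
    rw [ae_all_iff]; exact h
  have h1 : P (⋂ i ∈ S, g i ⁻¹' sets i) = P (⋂ i ∈ S, f i ⁻¹' sets i) := by
    refine measure_congr (Filter.eventuallyEq_set.2 (hae.mono fun ω hω => ?_))
    simp only [Set.mem_iInter, Set.mem_preimage]
    exact ⟨fun h' i hi => (hω i) ▸ h' i hi, fun h' i hi => (hω i).symm ▸ h' i hi⟩
  have h2 : ∀ i ∈ S, P (g i ⁻¹' sets i) = P (f i ⁻¹' sets i) := by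
    intro i _
    refine measure_congr (Filter.eventuallyEq_set.2 ((h i).mono fun ω hω => ?_))
    simp only [Set.mem_preimage, hω]
  rw [h1, hf S hsets]
  exact (Finset.prod_congr rfl h2).symm

/-- Lemma 5.13.  Let `Z, G₁, G₂` be independent standard Gaussians and
`U = ρZ + √(1−ρ²)G₁`, `V = ρZ + √(1−ρ²)G₂`.  Let `γ > 0`, `ρ ∈ [0,1]` and `λ, μ ≥ 0`
satisfy `λ² < γ`, `μ² < γ` and `λ²ρ²/(γ−λ²+λ²ρ²) + μ²ρ²/(γ−μ²+μ²ρ²) < 1` (the paper's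
threshold condition `F(λ,μ,ρ,γ) < 1`).  Then the family
`(k,l) ↦ (λ²/γ)^k (μ²/γ)^l / (2^{k+l} k! l!) · E[U^{2k}V^{2l}]` is summable,
`exp((λ²U² + μ²V²)/(2γ))` is integrable, and the sum of the family equals
`E[exp((λ²U² + μ²V²)/(2γ))] < ∞`. -/
theorem stmt15 {Ω : Type*} [MeasurableSpace Ω] (P : Measure Ω) [IsProbabilityMeasure P]
    (Z G₁ G₂ : Ω → ℝ)
    (hZ : Measure.map Z P = gaussianReal 0 1)
    (hG₁ : Measure.map G₁ P = gaussianReal 0 1)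
    (hG₂ : Measure.map G₂ P = gaussianReal 0 1)
    (hindep : iIndepFun ![Z, G₁, G₂] P)
    (rho lam mu γ : ℝ)
    (hrho : 0 ≤ rho ∧ rho ≤ 1) (hγ : 0 < γ) (hlam : 0 ≤ lam) (hmu : 0 ≤ mu)
    (hlam2 : lam ^ 2 < γ) (hmu2 : mu ^ 2 < γ)
    (hF : lam ^ 2 * rho ^ 2 / (γ - lam ^ 2 + lam ^ 2 * rho ^ 2)
        + mu ^ 2 * rho ^ 2 / (γ - mu ^ 2 + mu ^ 2 * rho ^ 2) < 1)
    (U V : Ω → ℝ)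
    (hU : ∀ ω, U ω = rho * Z ω + Real.sqrt (1 - rho ^ 2) * G₁ ω)
    (hV : ∀ ω, V ω = rho * Z ω + Real.sqrt (1 - rho ^ 2) * G₂ ω) :
    Summable (fun p : ℕ × ℕ =>
      (lam ^ 2 / γ) ^ p.1 * (mu ^ 2 / γ) ^ p.2
        / (2 ^ (p.1 + p.2) * (Nat.factorial p.1 : ℝ) * (Nat.factorial p.2 : ℝ))
        * ∫ ω, U ω ^ (2 * p.1) * V ω ^ (2 * p.2) ∂P) ∧
    Integrable (fun ω => Real.exp ((lam ^ 2 * U ω ^ 2 + mu ^ 2 * V ω ^ 2) / (2 * γ))) P ∧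
    ∑' p : ℕ × ℕ,
        (lam ^ 2 / γ) ^ p.1 * (mu ^ 2 / γ) ^ p.2
          / (2 ^ (p.1 + p.2) * (Nat.factorial p.1 : ℝ) * (Nat.factorial p.2 : ℝ))
          * ∫ ω, U ω ^ (2 * p.1) * V ω ^ (2 * p.2) ∂P
      = ∫ ω, Real.exp ((lam ^ 2 * U ω ^ 2 + mu ^ 2 * V ω ^ 2) / (2 * γ)) ∂P := by
  obtain ⟨hrho0, hrho1⟩ := hrho
  have hs2nn : (0:ℝ) ≤ 1 - rho ^ 2 := by nlinarith
  have hs2 : Real.sqrt (1 - rho ^ 2) ^ 2 = 1 - rho ^ 2 := Real.sq_sqrt hs2nn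
  set s : ℝ := Real.sqrt (1 - rho ^ 2) with hs_def
  -- a.e. measurability
  have hPne : (gaussianReal 0 1 : Measure ℝ) ≠ 0 := IsProbabilityMeasure.ne_zero _
  have hZae : AEMeasurable Z P := by
    by_contra hc; rw [Measure.map_of_not_aemeasurable hc] at hZ; exact hPne hZ.symm
  have hG₁ae : AEMeasurable G₁ P := by
    by_contra hc; rw [Measure.map_of_not_aemeasurable hc] at hG₁; exact hPne hG₁.symm
  have hG₂ae : AEMeasurable G₂ P := by
    by_contra hc; rw [Measure.map_of_not_aemeasurable hc] at hG₂; exact hPne hG₂.symm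
  have hUeq : U = fun ω => rho * Z ω + s * G₁ ω := funext hU
  have hVeq : V = fun ω => rho * Z ω + s * G₂ ω := funext hV
  have hUae : AEMeasurable U P := by
    rw [hUeq]; exact (hZae.const_mul _).add (hG₁ae.const_mul _)
  have hVae : AEMeasurable V P := by
    rw [hVeq]; exact (hZae.const_mul _).add (hG₂ae.const_mul _)
  -- measurable modifications
  set Z' := hZae.mk Z with hZ'def
  set G₁' := hG₁ae.mk G₁ with hG₁'def
  set G₂' := hG₂ae.mk G₂ with hG₂'def
  have hZZ' : Z =ᵐ[P] Z' := hZae.ae_eq_mk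
  have hGG₁' : G₁ =ᵐ[P] G₁' := hG₁ae.ae_eq_mk
  have hGG₂' : G₂ =ᵐ[P] G₂' := hG₂ae.ae_eq_mk
  have hZ'm : Measurable Z' := hZae.measurable_mk
  have hG₁'m : Measurable G₁' := hG₁ae.measurable_mk
  have hG₂'m : Measurable G₂' := hG₂ae.measurable_mk
  have hindep' : iIndepFun ![Z', G₁', G₂'] P := by
    refine aux_iIndepFun_congr hindep fun i => ?_
    fin_cases i
    · simpa using hZZ'
    · simpa using hGG₁'
    · simpa using hGG₂'
  -- key integrability of products of exponentials
  have int1 : ∀ (X : Ω → ℝ) (c : ℝ), Measurable X → Measure.map X P = gaussianReal 0 1 →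
      c < 1 → Integrable (fun ω => Real.exp (c * X ω ^ 2 / 2)) P := by
    intro X c hXm hXlaw hc
    have h := aux_integrable_exp_sq_gaussian hc
    rw [← hXlaw] at h
    have hm : Measurable (fun x : ℝ => Real.exp (c * x ^ 2 / 2)) := by fun_prop
    exact (integrable_map_measure hm.aestronglyMeasurable hXm.aemeasurable).mp h
  have hZ'law : Measure.map Z' P = gaussianReal 0 1 := by
    rw [← Measure.map_congr hZZ']; exact hZ
  have hG₁'law : Measure.map G₁' P = gaussianReal 0 1 := by
    rw [← Measure.map_congr hGG₁']; exact hG₁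
  have hG₂'law : Measure.map G₂' P = gaussianReal 0 1 := by
    rw [← Measure.map_congr hGG₂']; exact hG₂
  have key : ∀ α β δ : ℝ, α < 1 → β < 1 → δ < 1 →
      Integrable (fun ω => Real.exp (α * Z ω ^ 2 / 2) * Real.exp (β * G₁ ω ^ 2 / 2)
        * Real.exp (δ * G₂ ω ^ 2 / 2)) P := by
    intro α β δ hα hβ hδ
    have hmeas : ∀ i, Measurable (![Z', G₁', G₂'] i) := by
      intro i
      fin_cases i
      · exact hZ'm
      · exact hG₁'m
      · exact hG₂'m
    have i01 : IndepFun Z' G₁' P := by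
      have := hindep'.indepFun (i := 0) (j := 1) (by decide)
      simpa using this
    have ipair : IndepFun (fun ω => (Z' ω, G₁' ω)) G₂' P := by
      have := hindep'.indepFun_prodMk hmeas 0 1 2 (by decide) (by decide)
      simpa using this
    have mexp : ∀ c : ℝ, Measurable (fun x : ℝ => Real.exp (c * x ^ 2 / 2)) := by
      intro c
      exact ((((measurable_id.pow_const 2).const_mul c).div_const 2)).exp
    have e01 : IndepFun (fun ω => Real.exp (α * Z' ω ^ 2 / 2))
        (fun ω => Real.exp (β * G₁' ω ^ 2 / 2)) P := i01.comp (mexp α) (mexp β)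
    have int01 : Integrable (fun ω => Real.exp (α * Z' ω ^ 2 / 2)
        * Real.exp (β * G₁' ω ^ 2 / 2)) P :=
      e01.integrable_mul (int1 Z' α hZ'm hZ'law hα) (int1 G₁' β hG₁'m hG₁'law hβ)
    have e2 : IndepFun (fun ω => Real.exp (α * Z' ω ^ 2 / 2) * Real.exp (β * G₁' ω ^ 2 / 2))
        (fun ω => Real.exp (δ * G₂' ω ^ 2 / 2)) P := by
      have hm : Measurable (fun p : ℝ × ℝ =>
          Real.exp (α * p.1 ^ 2 / 2) * Real.exp (β * p.2 ^ 2 / 2)) :=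
        ((((measurable_fst.pow_const 2).const_mul α).div_const 2)).exp.mul
          ((((measurable_snd.pow_const 2).const_mul β).div_const 2)).exp
      exact ipair.comp hm (mexp δ)
    have intall : Integrable (fun ω => Real.exp (α * Z' ω ^ 2 / 2)
        * Real.exp (β * G₁' ω ^ 2 / 2) * Real.exp (δ * G₂' ω ^ 2 / 2)) P :=
      e2.integrable_mul int01 (int1 G₂' δ hG₂'m hG₂'law hδ)
    refine intall.congr ?_
    filter_upwards [hZZ', hGG₁', hGG₂'] with ω h1 h2 h3
    rw [h1, h2, h3]
  -- constants
  set F1 : ℝ := lam ^ 2 * rho ^ 2 / (γ - lam ^ 2 + lam ^ 2 * rho ^ 2) with hF1def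
  set F2 : ℝ := mu ^ 2 * rho ^ 2 / (γ - mu ^ 2 + mu ^ 2 * rho ^ 2) with hF2def
  have hd1 : 0 < γ - lam ^ 2 + lam ^ 2 * rho ^ 2 := by
    have : (0:ℝ) ≤ lam ^ 2 * rho ^ 2 := by positivity
    linarith
  have hd2 : 0 < γ - mu ^ 2 + mu ^ 2 * rho ^ 2 := by
    have : (0:ℝ) ≤ mu ^ 2 * rho ^ 2 := by positivity
    linarith
  have hF1nn : 0 ≤ F1 := by positivity
  have hF2nn : 0 ≤ F2 := by positivity
  set c : ℝ := (1 + (F1 + F2)) / 2 with hcdef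
  have hc0 : 0 < c := by rw [hcdef]; linarith
  have hc1 : c < 1 := by rw [hcdef]; linarith
  have hFc : F1 + F2 < c := by rw [hcdef]; linarith
  set a : ℝ := lam ^ 2 / γ with hadef
  set b : ℝ := mu ^ 2 / γ with hbdef
  have ha0 : 0 ≤ a := by positivity
  have hb0 : 0 ≤ b := by positivity
  have ha1 : a < 1 := by rw [hadef, div_lt_one hγ]; exact hlam2
  have hb1 : b < 1 := by rw [hbdef, div_lt_one hγ]; exact hmu2
  set s2 : ℝ := 1 - rho ^ 2 with hs2def
  have hs2le1 : s2 ≤ 1 := by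
    rw [hs2def]
    have : (0:ℝ) ≤ rho ^ 2 := sq_nonneg rho
    linarith
  have hs2le : a * s2 < 1 := by
    have h : a * s2 ≤ a * 1 := mul_le_mul_of_nonneg_left hs2le1 ha0
    rw [mul_one] at h; linarith
  have hbs2le : b * s2 < 1 := by
    have h : b * s2 ≤ b * 1 := mul_le_mul_of_nonneg_left hs2le1 hb0
    rw [mul_one] at h; linarith
  have has2nn : 0 ≤ a * s2 := mul_nonneg ha0 hs2nn
  have hbs2nn : 0 ≤ b * s2 := mul_nonneg hb0 hs2nn
  have h1as2 : 0 < 1 - a * s2 := by linarith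
  have h1bs2 : 0 < 1 - b * s2 := by linarith
  set θ₁ : ℝ := c * (1 - a * s2) with hθ₁def
  set θ₂ : ℝ := c * (1 - b * s2) with hθ₂def
  have hθ₁0 : 0 < θ₁ := by positivity
  have hθ₂0 : 0 < θ₂ := by positivity
  have hθ₁1 : θ₁ < 1 := by
    have h : θ₁ ≤ c * 1 := mul_le_mul_of_nonneg_left (by linarith) hc0.le
    rw [mul_one] at h; linarith
  have hθ₂1 : θ₂ < 1 := by
    have h : θ₂ ≤ c * 1 := mul_le_mul_of_nonneg_left (by linarith) hc0.le
    rw [mul_one] at h; linarith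
  set α : ℝ := a * rho ^ 2 / θ₁ + b * rho ^ 2 / θ₂ with hαdef
  set β : ℝ := a * s2 / (1 - θ₁) with hβdef
  set δ : ℝ := b * s2 / (1 - θ₂) with hδdef
  clear_value s F1 F2 c a b s2 θ₁ θ₂ α β δ
  have h1as2eq : 1 - a * s2 = (γ - lam ^ 2 + lam ^ 2 * rho ^ 2) / γ := by
    rw [hadef, hs2def]; field_simp; ring
  have h1bs2eq : 1 - b * s2 = (γ - mu ^ 2 + mu ^ 2 * rho ^ 2) / γ := by
    rw [hbdef, hs2def]; field_simp; ring
  have hα1 : α < 1 := by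
    have e1 : a * rho ^ 2 / θ₁ = F1 / c := by
      rw [hθ₁def, h1as2eq, hadef, hF1def]
      rw [div_eq_div_iff (by positivity) (ne_of_gt hc0)]
      field_simp
    have e2 : b * rho ^ 2 / θ₂ = F2 / c := by
      rw [hθ₂def, h1bs2eq, hbdef, hF2def]
      rw [div_eq_div_iff (by positivity) (ne_of_gt hc0)]
      field_simp
    rw [hαdef, e1, e2, ← add_div, div_lt_one hc0]
    exact hFc
  have hc1' : (0:ℝ) < 1 - c := by linarith
  have hβ1 : β < 1 := by
    rw [hβdef, div_lt_one (by linarith), hθ₁def]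
    have h := mul_pos h1as2 hc1'
    have hexp : (1 - a * s2) * (1 - c) = 1 - c * (1 - a * s2) - a * s2 := by ring
    linarith
  have hδ1 : δ < 1 := by
    rw [hδdef, div_lt_one (by linarith), hθ₂def]
    have h := mul_pos h1bs2 hc1'
    have hexp : (1 - b * s2) * (1 - c) = 1 - c * (1 - b * s2) - b * s2 := by ring
    linarith
  -- pointwise bound for the main exponential
  have hptU : ∀ ω, a * U ω ^ 2 ≤ (a * rho ^ 2 / θ₁) * Z ω ^ 2 + β * G₁ ω ^ 2 := by
    intro ω
    have h := aux_sq_add_le (rho * Z ω) (s * G₁ ω) θ₁ hθ₁0 hθ₁1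
    have h' := mul_le_mul_of_nonneg_left h ha0
    rw [hU ω]
    calc a * (rho * Z ω + s * G₁ ω) ^ 2
        ≤ a * ((rho * Z ω) ^ 2 / θ₁ + (s * G₁ ω) ^ 2 / (1 - θ₁)) := h'
      _ = (a * rho ^ 2 / θ₁) * Z ω ^ 2 + β * G₁ ω ^ 2 := by
          rw [hβdef, mul_pow, mul_pow, hs2]
          field_simp
  have hptV : ∀ ω, b * V ω ^ 2 ≤ (b * rho ^ 2 / θ₂) * Z ω ^ 2 + δ * G₂ ω ^ 2 := by
    intro ω
    have h := aux_sq_add_le (rho * Z ω) (s * G₂ ω) θ₂ hθ₂0 hθ₂1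
    have h' := mul_le_mul_of_nonneg_left h hb0
    rw [hV ω]
    calc b * (rho * Z ω + s * G₂ ω) ^ 2
        ≤ b * ((rho * Z ω) ^ 2 / θ₂ + (s * G₂ ω) ^ 2 / (1 - θ₂)) := h'
      _ = (b * rho ^ 2 / θ₂) * Z ω ^ 2 + δ * G₂ ω ^ 2 := by
          rw [hδdef, mul_pow, mul_pow, hs2]
          field_simp
  have hargeq : ∀ ω, (lam ^ 2 * U ω ^ 2 + mu ^ 2 * V ω ^ 2) / (2 * γ)
      = a * U ω ^ 2 / 2 + b * V ω ^ 2 / 2 := by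
    intro ω
    rw [hadef, hbdef]
    rw [div_add_div _ _ two_ne_zero two_ne_zero]
    rw [div_eq_div_iff (by positivity) (by norm_num : (2:ℝ) * 2 ≠ 0)]
    field_simp
  have hemeas : AEStronglyMeasurable
      (fun ω => Real.exp ((lam ^ 2 * U ω ^ 2 + mu ^ 2 * V ω ^ 2) / (2 * γ))) P := by
    have hm : AEMeasurable (fun ω => (lam ^ 2 * U ω ^ 2 + mu ^ 2 * V ω ^ 2) / (2 * γ)) P :=
      (((hUae.pow_const 2).const_mul _).add ((hVae.pow_const 2).const_mul _)).div_const _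
    exact (Real.measurable_exp.comp_aemeasurable hm).aestronglyMeasurable
  have hmain_int : Integrable
      (fun ω => Real.exp ((lam ^ 2 * U ω ^ 2 + mu ^ 2 * V ω ^ 2) / (2 * γ))) P := by
    refine (key α β δ hα1 hβ1 hδ1).mono' hemeas ?_
    refine Filter.Eventually.of_forall fun ω => ?_
    rw [Real.norm_eq_abs, abs_of_pos (Real.exp_pos _)]
    rw [← Real.exp_add, ← Real.exp_add, Real.exp_le_exp, hargeq ω]
    have hsum : a * U ω ^ 2 + b * V ω ^ 2
        ≤ α * Z ω ^ 2 + β * G₁ ω ^ 2 + δ * G₂ ω ^ 2 := by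
      calc a * U ω ^ 2 + b * V ω ^ 2
          ≤ ((a * rho ^ 2 / θ₁) * Z ω ^ 2 + β * G₁ ω ^ 2)
            + ((b * rho ^ 2 / θ₂) * Z ω ^ 2 + δ * G₂ ω ^ 2) := add_le_add (hptU ω) (hptV ω)
        _ = α * Z ω ^ 2 + β * G₁ ω ^ 2 + δ * G₂ ω ^ 2 := by rw [hαdef]; ring
    linarith
  -- squares bounded by sums of squares
  have hU2 : ∀ ω, U ω ^ 2 ≤ Z ω ^ 2 + G₁ ω ^ 2 := by
    intro ω
    have h2 : rho ^ 2 + s2 = 1 := by rw [hs2def]; ring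
    have h' : (rho * Z ω + s * G₁ ω) ^ 2 + (s * Z ω - rho * G₁ ω) ^ 2
        = (rho ^ 2 + s ^ 2) * (Z ω ^ 2 + G₁ ω ^ 2) := by ring
    rw [hs2, h2, one_mul] at h'
    rw [hU ω]
    have := sq_nonneg (s * Z ω - rho * G₁ ω)
    linarith
  have hV2 : ∀ ω, V ω ^ 2 ≤ Z ω ^ 2 + G₂ ω ^ 2 := by
    intro ω
    have h2 : rho ^ 2 + s2 = 1 := by rw [hs2def]; ring
    have h' : (rho * Z ω + s * G₂ ω) ^ 2 + (s * Z ω - rho * G₂ ω) ^ 2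
        = (rho ^ 2 + s ^ 2) * (Z ω ^ 2 + G₂ ω ^ 2) := by ring
    rw [hs2, h2, one_mul] at h'
    rw [hV ω]
    have := sq_nonneg (s * Z ω - rho * G₂ ω)
    linarith
  -- integrability of the joint moments
  have hmom : ∀ k l : ℕ, Integrable (fun ω => U ω ^ (2 * k) * V ω ^ (2 * l)) P := by
    intro k l
    have hdom := (key (2/3) (1/3) (1/3) (by norm_num) (by norm_num) (by norm_num)).const_mul
      ((6:ℝ) ^ k * k.factorial * (6 ^ l * l.factorial))
    refine hdom.mono' (((hUae.pow_const _).mul (hVae.pow_const _)).aestronglyMeasurable) ?_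
    refine Filter.Eventually.of_forall fun ω => ?_
    have hUnn : (0:ℝ) ≤ U ω ^ (2 * k) := by rw [pow_mul]; positivity
    have hVnn : (0:ℝ) ≤ V ω ^ (2 * l) := by rw [pow_mul]; positivity
    rw [Real.norm_eq_abs, abs_of_nonneg (mul_nonneg hUnn hVnn)]
    have h1 := aux_pow_le_exp (U ω) k
    have h2 := aux_pow_le_exp (V ω) l
    calc U ω ^ (2 * k) * V ω ^ (2 * l)
        ≤ (6 ^ k * k.factorial * Real.exp (U ω ^ 2 / 6))
          * (6 ^ l * l.factorial * Real.exp (V ω ^ 2 / 6)) :=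
          mul_le_mul h1 h2 hVnn (by positivity)
      _ = (6 ^ k * (k.factorial:ℝ) * (6 ^ l * l.factorial))
          * Real.exp (U ω ^ 2 / 6 + V ω ^ 2 / 6) := by
          rw [Real.exp_add]; ring
      _ ≤ (6 ^ k * (k.factorial:ℝ) * (6 ^ l * l.factorial))
          * (Real.exp (2/3 * Z ω ^ 2 / 2) * Real.exp (1/3 * G₁ ω ^ 2 / 2)
            * Real.exp (1/3 * G₂ ω ^ 2 / 2)) := by
          refine mul_le_mul_of_nonneg_left ?_ (by positivity)
          rw [← Real.exp_add, ← Real.exp_add, Real.exp_le_exp]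
          have h3 := hU2 ω
          have h4 := hV2 ω
          linarith
  -- nonnegativity and algebraic identity for the series terms
  have hfactpos : ∀ k : ℕ, (0:ℝ) < k.factorial := fun k => by exact_mod_cast k.factorial_pos
  have hrepr : ∀ (k l : ℕ) (ω : Ω),
      (a * U ω ^ 2 / 2) ^ k / k.factorial * ((b * V ω ^ 2 / 2) ^ l / l.factorial)
      = a ^ k * b ^ l / (2 ^ (k + l) * (k.factorial:ℝ) * l.factorial)
        * (U ω ^ (2 * k) * V ω ^ (2 * l)) := by
    intro k l ω
    rw [pow_mul, pow_mul, div_pow, div_pow, mul_pow, mul_pow, pow_add]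
    field_simp [ne_of_gt (hfactpos k), ne_of_gt (hfactpos l)]
  have hx0 : ∀ ω, (0:ℝ) ≤ a * U ω ^ 2 / 2 := by
    intro ω
    have := sq_nonneg (U ω)
    have := mul_nonneg ha0 (sq_nonneg (U ω))
    positivity
  have hy0 : ∀ ω, (0:ℝ) ≤ b * V ω ^ 2 / 2 := by
    intro ω
    have := mul_nonneg hb0 (sq_nonneg (V ω))
    positivity
  have hxk0 : ∀ (ω) (k : ℕ), (0:ℝ) ≤ (a * U ω ^ 2 / 2) ^ k / k.factorial :=
    fun ω k => div_nonneg (pow_nonneg (hx0 ω) k) (Nat.cast_nonneg _)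
  have hyl0 : ∀ (ω) (l : ℕ), (0:ℝ) ≤ (b * V ω ^ 2 / 2) ^ l / l.factorial :=
    fun ω l => div_nonneg (pow_nonneg (hy0 ω) l) (Nat.cast_nonneg _)
  have hpnn : ∀ (p : ℕ × ℕ) (ω : Ω), (0:ℝ) ≤
      (a * U ω ^ 2 / 2) ^ p.1 / p.1.factorial * ((b * V ω ^ 2 / 2) ^ p.2 / p.2.factorial) :=
    fun p ω => mul_nonneg (hxk0 ω p.1) (hyl0 ω p.2)
  -- integrability of each term
  have hintp : ∀ p : ℕ × ℕ, Integrable (fun ω =>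
      (a * U ω ^ 2 / 2) ^ p.1 / p.1.factorial
        * ((b * V ω ^ 2 / 2) ^ p.2 / p.2.factorial)) P := by
    intro p
    have h := (hmom p.1 p.2).const_mul
      (a ^ p.1 * b ^ p.2 / (2 ^ (p.1 + p.2) * (p.1.factorial:ℝ) * p.2.factorial))
    refine h.congr (Filter.Eventually.of_forall fun ω => ?_)
    exact (hrepr p.1 p.2 ω).symm
  -- the ENNReal-valued integrals
  set r : ℕ × ℕ → ENNReal := fun p => ∫⁻ ω, ENNReal.ofReal
    ((a * U ω ^ 2 / 2) ^ p.1 / p.1.factorial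
      * ((b * V ω ^ 2 / 2) ^ p.2 / p.2.factorial)) ∂P with hrdef
  have haep : ∀ p : ℕ × ℕ, AEMeasurable (fun ω => ENNReal.ofReal
      ((a * U ω ^ 2 / 2) ^ p.1 / p.1.factorial
        * ((b * V ω ^ 2 / 2) ^ p.2 / p.2.factorial))) P :=
    fun p => (hintp p).aemeasurable.ennreal_ofReal
  -- pointwise sum of the series
  have hsum_pt : ∀ ω, (∑' p : ℕ × ℕ, ENNReal.ofReal
      ((a * U ω ^ 2 / 2) ^ p.1 / p.1.factorial
        * ((b * V ω ^ 2 / 2) ^ p.2 / p.2.factorial)))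
      = ENNReal.ofReal (Real.exp ((lam ^ 2 * U ω ^ 2 + mu ^ 2 * V ω ^ 2) / (2 * γ))) := by
    intro ω
    calc (∑' p : ℕ × ℕ, ENNReal.ofReal
          ((a * U ω ^ 2 / 2) ^ p.1 / p.1.factorial
            * ((b * V ω ^ 2 / 2) ^ p.2 / p.2.factorial)))
        = ∑' k : ℕ, ∑' l : ℕ, ENNReal.ofReal ((a * U ω ^ 2 / 2) ^ k / k.factorial)
            * ENNReal.ofReal ((b * V ω ^ 2 / 2) ^ l / l.factorial) := by
          rw [ENNReal.tsum_prod']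
          exact tsum_congr fun k => tsum_congr fun l => ENNReal.ofReal_mul (hxk0 ω k)
      _ = (∑' k : ℕ, ENNReal.ofReal ((a * U ω ^ 2 / 2) ^ k / k.factorial))
            * (∑' l : ℕ, ENNReal.ofReal ((b * V ω ^ 2 / 2) ^ l / l.factorial)) := by
          simp_rw [ENNReal.tsum_mul_left]
          rw [ENNReal.tsum_mul_right]
      _ = ENNReal.ofReal (Real.exp (a * U ω ^ 2 / 2))
            * ENNReal.ofReal (Real.exp (b * V ω ^ 2 / 2)) := by
          rw [← ENNReal.ofReal_tsum_of_nonneg (hxk0 ω) (Real.summable_pow_div_factorial _),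
            ← ENNReal.ofReal_tsum_of_nonneg (hyl0 ω) (Real.summable_pow_div_factorial _),
            ← aux_exp_tsum, ← aux_exp_tsum]
      _ = ENNReal.ofReal (Real.exp ((lam ^ 2 * U ω ^ 2 + mu ^ 2 * V ω ^ 2) / (2 * γ))) := by
          rw [← ENNReal.ofReal_mul (Real.exp_nonneg _), ← Real.exp_add, ← hargeq ω]
  -- exchange sum and integral
  have hswap : ∑' p : ℕ × ℕ, r p = ∫⁻ ω, ENNReal.ofReal
      (Real.exp ((lam ^ 2 * U ω ^ 2 + mu ^ 2 * V ω ^ 2) / (2 * γ))) ∂P := by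
    rw [hrdef, ← lintegral_tsum haep]
    exact lintegral_congr fun ω => hsum_pt ω
  have hLtop : (∫⁻ ω, ENNReal.ofReal
      (Real.exp ((lam ^ 2 * U ω ^ 2 + mu ^ 2 * V ω ^ 2) / (2 * γ))) ∂P) < ⊤ :=
    hmain_int.lintegral_lt_top
  have htop : ∑' p : ℕ × ℕ, r p ≠ ⊤ := by rw [hswap]; exact hLtop.ne
  have hterm : ∀ p : ℕ × ℕ,
      a ^ p.1 * b ^ p.2 / (2 ^ (p.1 + p.2) * (p.1.factorial:ℝ) * p.2.factorial)
        * ∫ ω, U ω ^ (2 * p.1) * V ω ^ (2 * p.2) ∂P = (r p).toReal := by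
    intro p
    rw [← integral_const_mul]
    rw [show (fun ω => a ^ p.1 * b ^ p.2 / (2 ^ (p.1 + p.2) * (p.1.factorial:ℝ) * p.2.factorial)
        * (U ω ^ (2 * p.1) * V ω ^ (2 * p.2)))
      = fun ω => (a * U ω ^ 2 / 2) ^ p.1 / p.1.factorial
          * ((b * V ω ^ 2 / 2) ^ p.2 / p.2.factorial)
      from funext fun ω => (hrepr p.1 p.2 ω).symm]
    rw [integral_eq_lintegral_of_nonneg_ae (Filter.Eventually.of_forall fun ω => hpnn p ω)
      (hintp p).aestronglyMeasurable]
  have hmaineq : ∫ ω, Real.exp ((lam ^ 2 * U ω ^ 2 + mu ^ 2 * V ω ^ 2) / (2 * γ)) ∂P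
      = (∫⁻ ω, ENNReal.ofReal
          (Real.exp ((lam ^ 2 * U ω ^ 2 + mu ^ 2 * V ω ^ 2) / (2 * γ))) ∂P).toReal :=
    integral_eq_lintegral_of_nonneg_ae
      (Filter.Eventually.of_forall fun ω => (Real.exp_pos _).le) hemeas
  have hfun : (fun p : ℕ × ℕ =>
      a ^ p.1 * b ^ p.2 / (2 ^ (p.1 + p.2) * (p.1.factorial:ℝ) * p.2.factorial)
        * ∫ ω, U ω ^ (2 * p.1) * V ω ^ (2 * p.2) ∂P)
      = fun p : ℕ × ℕ => (r p).toReal := funext hterm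
  refine ⟨?_, hmain_int, ?_⟩
  · rw [hfun]
    exact ENNReal.summable_toReal htop
  · rw [hfun, ← ENNReal.tsum_toReal_eq (fun p => ne_top_of_le_ne_top htop (ENNReal.le_tsum p)),
      hswap, hmaineq]
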